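/- arXiv:0904.3465 — 4 statements merged into one kernel-verified Lean document; each statement's English description precedes it below -/
import Mathlib

section
/- Let Q ∈ S and u ∈ ℤ_{>0}^n, v ∈ ℤ^n with u + v = k·(1,...,1). If Q is quasi-homogeneous with respect to u, then D(Q) is a graded S^u-submodule of Der_K(S) with respect to the (u,v)-grading; that is, for any δ ∈ D(Q), each (u,v)-homogeneous component of δ also lies in D(Q). -/
open MvPolynomial

/-- A derivation `δ = Σ aᵢ ∂ᵢ` is represented by its coefficient vector `a`;
`derMap g a = δ(g)`. -/
noncomputable def derMap {K : Type} [Field K] {n : ℕ} (g : MvPolynomial (Fin n) K) :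
    (Fin n → MvPolynomial (Fin n) K) →ₗ[MvPolynomial (Fin n) K] MvPolynomial (Fin n) K where
  toFun a := ∑ i, a i * MvPolynomial.pderiv i g
  map_add' a b := by simp [add_mul, Finset.sum_add_distrib]
  map_smul' c a := by simp [Finset.mul_sum, mul_assoc]

/-- `D(g; k) = {δ : g^k ∣ δ(g)}`. -/
noncomputable def Dgk {K : Type} [Field K] {n : ℕ} (g : MvPolynomial (Fin n) K) (k : ℕ) :
    Submodule (MvPolynomial (Fin n) K) (Fin n → MvPolynomial (Fin n) K) :=
  Submodule.comap (derMap g) (Ideal.span {g ^ k})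

/-- `D(f) = ⋂ D(fᵢ; eᵢ)` for the irreducible factorization `f = ∏ fᵢ^{eᵢ}`. -/
noncomputable def DQ {K : Type} [Field K] {n r : ℕ} (f : Fin r → MvPolynomial (Fin n) K)
    (e : Fin r → ℕ) : Submodule (MvPolynomial (Fin n) K) (Fin n → MvPolynomial (Fin n) K) :=
  ⨅ i, Dgk (f i) (e i)

section Aux
open Finsupp
variable {σ R : Type} [CommRing R]



/-- Component of a product with a weighted-homogeneous factor. -/
lemma whc_mul_homog [DecidableEq σ] {w : σ → ℤ} {g : MvPolynomial σ R} {s : ℤ}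
    (hg : g.IsWeightedHomogeneous w s) (h : MvPolynomial σ R) (t : ℤ) :
    weightedHomogeneousComponent w t (h * g) =
      weightedHomogeneousComponent w (t - s) h * g := by
  ext d
  rw [coeff_weightedHomogeneousComponent, coeff_mul, coeff_mul]
  split_ifs with hd
  · refine Finset.sum_congr rfl fun x hx => ?_
    rw [Finset.HasAntidiagonal.mem_antidiagonal] at hx
    rw [coeff_weightedHomogeneousComponent]
    split_ifs with h1
    · rfl
    · by_cases h2 : coeff x.2 g = 0
      · rw [h2, mul_zero, mul_zero]
      · exfalso
        apply h1
        have hw : weight w x.1 + weight w x.2 = t := by rw [← map_add, hx, hd]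
        have := hg h2
        omega
  · symm
    refine Finset.sum_eq_zero fun x hx => ?_
    rw [Finset.HasAntidiagonal.mem_antidiagonal] at hx
    rw [coeff_weightedHomogeneousComponent]
    split_ifs with h1
    · by_cases h2 : coeff x.2 g = 0
      · rw [h2, mul_zero]
      · exfalso
        apply hd
        have := hg h2
        rw [← hx, map_add, this, h1]
        ring
    · rw [zero_mul]

lemma isWeightedHomogeneous_pderiv {w : σ → ℤ} {g : MvPolynomial σ R} {s : ℤ}
    (hg : g.IsWeightedHomogeneous w s) (i : σ) :
    (pderiv i g).IsWeightedHomogeneous w (s - w i) := by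
  classical
  nth_rewrite 1 [g.as_sum]
  rw [map_sum]
  apply IsWeightedHomogeneous.sum
  intro d hd
  rw [pderiv_monomial]
  by_cases h0 : d i = 0
  · rw [h0]; simp only [Nat.cast_zero, mul_zero, map_zero]
    exact isWeightedHomogeneous_zero _ _ _
  · apply isWeightedHomogeneous_monomial
    have hdd : (d - single i 1) + single i 1 = d := by
      ext j
      simp only [Finsupp.add_apply, Finsupp.tsub_apply, Finsupp.single_apply]
      by_cases hji : i = j
      · subst hji; simp; omega
      · simp [hji]
    have hwd : weight w d = s := hg (MvPolynomial.mem_support_iff.mp hd)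
    have h1 : weight w (single i 1) = w i := by
      simp [weight_apply, Finsupp.sum_single_index]
    have := congrArg (weight w) hdd
    rw [map_add, h1, hwd] at this
    omega



lemma whc_min_mul [DecidableEq σ] {w : σ → ℤ} {p q : MvPolynomial σ R} {a b : ℤ}
    (hp : ∀ d ∈ p.support, a ≤ weight w d) (hq : ∀ d ∈ q.support, b ≤ weight w d) :
    weightedHomogeneousComponent w (a + b) (p * q) =
      weightedHomogeneousComponent w a p * weightedHomogeneousComponent w b q := by
  ext d
  rw [coeff_weightedHomogeneousComponent, coeff_mul, coeff_mul]
  split_ifs with hd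
  · refine Finset.sum_congr rfl fun x hx => ?_
    rw [Finset.HasAntidiagonal.mem_antidiagonal] at hx
    rw [coeff_weightedHomogeneousComponent, coeff_weightedHomogeneousComponent]
    by_cases h1 : coeff x.1 p = 0
    · rw [h1, zero_mul]
      split_ifs with c1 c2 <;> simp [h1]
    by_cases h2 : coeff x.2 q = 0
    · rw [h2, mul_zero]
      split_ifs with c1 c2 <;> simp [h2]
    have ha' := hp x.1 (MvPolynomial.mem_support_iff.mpr h1)
    have hb' := hq x.2 (MvPolynomial.mem_support_iff.mpr h2)
    have hw : weight w x.1 + weight w x.2 = a + b := by rw [← map_add, hx, hd]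
    rw [if_pos (by omega), if_pos (by omega)]
  · symm
    refine Finset.sum_eq_zero fun x hx => ?_
    rw [Finset.HasAntidiagonal.mem_antidiagonal] at hx
    rw [coeff_weightedHomogeneousComponent, coeff_weightedHomogeneousComponent]
    split_ifs with c1 c2
    · exfalso; apply hd; rw [← hx, map_add, c1, c2]
    · rw [mul_zero]
    · rw [zero_mul]
    · rw [zero_mul]

lemma weight_neg_apply (w : σ → ℤ) (d : σ →₀ ℕ) :
    weight (fun i => -(w i)) d = - weight w d := by
  simp [weight_apply, Finsupp.sum, Finset.sum_neg_distrib]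

lemma whc_neg_weight (w : σ → ℤ) (m : ℤ) (p : MvPolynomial σ R) :
    weightedHomogeneousComponent (fun i => -(w i)) (-m) p =
      weightedHomogeneousComponent w m p := by
  classical
  ext d
  rw [coeff_weightedHomogeneousComponent, coeff_weightedHomogeneousComponent,
    weight_neg_apply]
  simp [neg_inj]

lemma whc_max_mul [DecidableEq σ] {w : σ → ℤ} {p q : MvPolynomial σ R} {a b : ℤ}
    (hp : ∀ d ∈ p.support, weight w d ≤ a) (hq : ∀ d ∈ q.support, weight w d ≤ b) :
    weightedHomogeneousComponent w (a + b) (p * q) =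
      weightedHomogeneousComponent w a p * weightedHomogeneousComponent w b q := by
  have := whc_min_mul (w := fun i => -(w i)) (p := p) (q := q) (a := -a) (b := -b)
    (fun d hd => by rw [weight_neg_apply]; exact neg_le_neg (hp d hd))
    (fun d hd => by rw [weight_neg_apply]; exact neg_le_neg (hq d hd))
  rw [show (-a) + (-b) = -(a + b) by ring, whc_neg_weight, whc_neg_weight, whc_neg_weight] at this
  exact this

lemma whc_self_ne_zero {w : σ → ℤ} {p : MvPolynomial σ R} {d : σ →₀ ℕ}
    (hd : coeff d p ≠ 0) :
    weightedHomogeneousComponent w (weight w d) p ≠ 0 := by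
  classical
  intro h
  have := coeff_weightedHomogeneousComponent (w := w) (weight w d) p d
  rw [h, if_pos rfl, coeff_zero] at this
  exact hd this.symm

/-- Factors of a weighted-homogeneous polynomial (positive weights, domain) are homogeneous. -/
lemma isWeightedHomogeneous_of_factor [IsDomain R] {w : σ → ℤ} (hw : ∀ i, 0 < w i)
    {p q : MvPolynomial σ R} {d : ℤ} (hQ : (p * q).IsWeightedHomogeneous w d)
    (hp0 : p ≠ 0) (hq0 : q ≠ 0) : ∃ s, p.IsWeightedHomogeneous w s := by
  classical
  have hpne : (p.support.image (weight w)).Nonempty :=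
    (Finset.image_nonempty).mpr (support_nonempty.mpr hp0)
  have hqne : (q.support.image (weight w)).Nonempty :=
    (Finset.image_nonempty).mpr (support_nonempty.mpr hq0)
  set a := (p.support.image (weight w)).min' hpne with ha
  set A := (p.support.image (weight w)).max' hpne with hA
  set b := (q.support.image (weight w)).min' hqne with hb
  set B := (q.support.image (weight w)).max' hqne with hB
  have hpa : ∀ e ∈ p.support, a ≤ weight w e := fun e he =>
    Finset.min'_le _ _ (Finset.mem_image_of_mem _ he)
  have hpA : ∀ e ∈ p.support, weight w e ≤ A := fun e he =>
    Finset.le_max' _ _ (Finset.mem_image_of_mem _ he)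
  have hqb : ∀ e ∈ q.support, b ≤ weight w e := fun e he =>
    Finset.min'_le _ _ (Finset.mem_image_of_mem _ he)
  have hqB : ∀ e ∈ q.support, weight w e ≤ B := fun e he =>
    Finset.le_max' _ _ (Finset.mem_image_of_mem _ he)
  -- the extreme components are nonzero
  obtain ⟨da, hda, hda'⟩ := Finset.mem_image.mp ((p.support.image (weight w)).min'_mem hpne)
  obtain ⟨dA, hdA, hdA'⟩ := Finset.mem_image.mp ((p.support.image (weight w)).max'_mem hpne)
  obtain ⟨db, hdb, hdb'⟩ := Finset.mem_image.mp ((q.support.image (weight w)).min'_mem hqne)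
  obtain ⟨dB, hdB, hdB'⟩ := Finset.mem_image.mp ((q.support.image (weight w)).max'_mem hqne)
  rw [← ha] at hda'
  rw [← hA] at hdA'
  rw [← hb] at hdb'
  rw [← hB] at hdB'
  have hca : weightedHomogeneousComponent w a p ≠ 0 := by
    rw [← hda']; exact whc_self_ne_zero (MvPolynomial.mem_support_iff.mp hda)
  have hcA : weightedHomogeneousComponent w A p ≠ 0 := by
    rw [← hdA']; exact whc_self_ne_zero (MvPolynomial.mem_support_iff.mp hdA)
  have hcb : weightedHomogeneousComponent w b q ≠ 0 := by
    rw [← hdb']; exact whc_self_ne_zero (MvPolynomial.mem_support_iff.mp hdb)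
  have hcB : weightedHomogeneousComponent w B q ≠ 0 := by
    rw [← hdB']; exact whc_self_ne_zero (MvPolynomial.mem_support_iff.mp hdB)
  have hmin : weightedHomogeneousComponent w (a + b) (p * q) ≠ 0 := by
    rw [whc_min_mul hpa hqb]; exact mul_ne_zero hca hcb
  have hmax : weightedHomogeneousComponent w (A + B) (p * q) ≠ 0 := by
    rw [whc_max_mul hpA hqB]; exact mul_ne_zero hcA hcB
  have h1 : a + b = d := by
    by_contra hne
    exact hmin (hQ.weightedHomogeneousComponent_ne _ hne)
  have h2 : A + B = d := by
    by_contra hne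
    exact hmax (hQ.weightedHomogeneousComponent_ne _ hne)
  have haA : a ≤ A := Finset.min'_le _ _ ((p.support.image (weight w)).max'_mem hpne)
  have hbB : b ≤ B := Finset.min'_le _ _ ((q.support.image (weight w)).max'_mem hqne)
  refine ⟨a, fun e he => ?_⟩
  have h3 := hpa e (MvPolynomial.mem_support_iff.mpr he)
  have h4 := hpA e (MvPolynomial.mem_support_iff.mpr he)
  omega

lemma isWeightedHomogeneous_pow {w : σ → ℤ} {g : MvPolynomial σ R} {s : ℤ}
    (hg : g.IsWeightedHomogeneous w s) (m : ℕ) :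
    (g ^ m).IsWeightedHomogeneous w (m * s) := by
  induction m with
  | zero => simpa using isWeightedHomogeneous_one R w
  | succ m ih =>
      rw [pow_succ]
      have h2 : ((m + 1 : ℕ) : ℤ) * s = (m : ℤ) * s + s := by push_cast; ring
      rw [h2]
      exact ih.mul hg


end Aux

/-- If `Q` is quasi-homogeneous w.r.t. `u` (with `u + v = k·(1,…,1)`),
then `D(Q)` is a graded submodule of `Der_K(S)` for the `(u,v)`-grading: the
`(u,v)`-homogeneous components of any `δ ∈ D(Q)` again lie in `D(Q)`. -/
theorem DQ_graded_of_quasiHomogeneous {K : Type} [Field K] [CharZero K] {n r : ℕ}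
    (u v : Fin n → ℤ) (k : ℤ) (hu : ∀ i, 0 < u i) (huv : ∀ i, u i + v i = k)
    (Q : MvPolynomial (Fin n) K) (fi : Fin r → MvPolynomial (Fin n) K) (e : Fin r → ℕ)
    (hirr : ∀ i, Irreducible (fi i)) (hfac : Q = ∏ i, fi i ^ e i)
    (d : ℤ) (hQ : Q.IsWeightedHomogeneous u d)
    (a : Fin n → MvPolynomial (Fin n) K) (ha : a ∈ DQ fi e) (j : ℤ) :
    (fun i => weightedHomogeneousComponent u (j - v i) (a i)) ∈ DQ fi e := by
  rw [DQ, Submodule.mem_iInf] at ha ⊢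
  intro i
  have hai := ha i
  rw [Dgk, Submodule.mem_comap, Ideal.mem_span_singleton] at hai ⊢
  set g := fi i with hg
  have hder : ∀ b : Fin n → MvPolynomial (Fin n) K,
      derMap g b = ∑ i', b i' * pderiv i' g := fun b => rfl
  rw [hder] at hai ⊢
  rcases Nat.eq_zero_or_pos (e i) with he | he
  · rw [he, pow_zero]; exact one_dvd _
  -- g is weighted homogeneous of some degree s
  have hg0 : g ≠ 0 := (hirr i).ne_zero
  have hgdvd : g ∣ Q := by
    rw [hfac]
    exact dvd_trans (dvd_pow_self g (Nat.pos_iff_ne_zero.mp he))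
      (Finset.dvd_prod_of_mem _ (Finset.mem_univ i))
  obtain ⟨q, hq⟩ := hgdvd
  have hQ0 : Q ≠ 0 := by
    rw [hfac]
    exact Finset.prod_ne_zero_iff.mpr fun i' _ => pow_ne_zero _ (hirr i').ne_zero
  have hq0 : q ≠ 0 := fun h => hQ0 (by rw [hq, h, mul_zero])
  obtain ⟨s, hgs⟩ := isWeightedHomogeneous_of_factor hu (hq ▸ hQ) hg0 hq0
  -- rewrite each summand as a component of a_i' * pderiv i' g
  have hterm : ∀ i', weightedHomogeneousComponent u (j - v i') (a i') * pderiv i' g =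
      weightedHomogeneousComponent u (j + s - k) (a i' * pderiv i' g) := by
    intro i'
    rw [whc_mul_homog (isWeightedHomogeneous_pderiv hgs i') (a i') (j + s - k),
      show j + s - k - (s - u i') = j - v i' from by linarith [huv i']]
  calc g ^ e i ∣ ∑ i', weightedHomogeneousComponent u (j + s - k) (a i' * pderiv i' g) := by
        obtain ⟨c, hc⟩ := hai
        rw [← map_sum, hc, mul_comm, whc_mul_homog (isWeightedHomogeneous_pow hgs (e i)) c _]
        exact Dvd.intro_left _ rfl
    _ = ∑ i', weightedHomogeneousComponent u (j - v i') (a i') * pderiv i' g := by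
        exact Finset.sum_congr rfl fun i' _ => (hterm i').symm
end

section
/- Let Q ∈ S, u ∈ ℤ_{>0}^n and v ∈ ℤ^n with u + v = k·(1,...,1). If D(Q) is a graded submodule of Der_K(S) with respect to the (u,v)-grading, then Q is quasi-homogeneous with respect to u. -/
open MvPolynomial

private lemma coeff_pderiv' {K : Type} [Field K] {n : ℕ} (i : Fin n)
    (p : MvPolynomial (Fin n) K) (d : Fin n →₀ ℕ) :
    coeff d (pderiv i p) = ((d i + 1 : ℕ) : K) * coeff (d + Finsupp.single i 1) p := by
  induction p using MvPolynomial.induction_on' with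
  | monomial s a =>
    rw [pderiv_monomial, coeff_monomial, coeff_monomial]
    split_ifs with h1 h2 h2
    · subst h2
      rw [Finsupp.add_apply, Finsupp.single_eq_same]
      push_cast; ring
    · by_cases hsi : s i = 0
      · rw [hsi]; push_cast; ring
      · exfalso; apply h2
        ext j
        rw [Finsupp.add_apply, ← h1, Finsupp.tsub_apply, Finsupp.single_apply]
        split_ifs with hij
        · subst hij; omega
        · omega
    · exfalso; apply h1; rw [h2]
      ext j
      rw [Finsupp.tsub_apply, Finsupp.add_apply, Finsupp.single_apply]
      split_ifs <;> omega
    · ring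
  | add p q hp hq => simp [hp, hq, mul_add]

private lemma exists_pderiv_ne_zero' {K : Type} [Field K] [CharZero K] {n : ℕ}
    {p : MvPolynomial (Fin n) K} (hp : Irreducible p) : ∃ i, pderiv i p ≠ 0 := by
  by_contra h
  push_neg at h
  have hC : ∀ m : Fin n →₀ ℕ, m ≠ 0 → coeff m p = 0 := by
    intro m hm
    obtain ⟨i, hi⟩ : ∃ i, m i ≠ 0 := by
      by_contra h'
      push_neg at h'
      exact hm (Finsupp.ext h')
    have h0 := coeff_pderiv' i p (m - Finsupp.single i 1)
    rw [h i, coeff_zero] at h0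
    have hle : Finsupp.single i 1 ≤ m := Finsupp.single_le_iff.mpr (Nat.one_le_iff_ne_zero.mpr hi)
    rw [tsub_add_cancel_of_le hle] at h0
    rcases mul_eq_zero.mp h0.symm with h' | h'
    · rw [Nat.cast_eq_zero] at h'
      exact absurd h' (Nat.succ_ne_zero _)
    · exact h'
  have hpC : p = C (coeff 0 p) := by
    ext m
    rcases eq_or_ne m 0 with rfl | hm
    · simp
    · rw [hC m hm, coeff_C, if_neg fun h' => hm h'.symm]
  rcases eq_or_ne (coeff 0 p) 0 with h0 | h0
  · rw [h0, map_zero] at hpC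
    exact hp.ne_zero hpC
  · exact hp.not_isUnit (hpC ▸ (isUnit_iff_ne_zero.mpr h0).map (C : K →+* MvPolynomial (Fin n) K))

private lemma support_pderiv_mem' {K : Type} [Field K] {n : ℕ} {i : Fin n}
    {p : MvPolynomial (Fin n) K} {d : Fin n →₀ ℕ} (hd : d ∈ (pderiv i p).support) :
    d + Finsupp.single i 1 ∈ p.support := by
  rw [mem_support_iff] at hd ⊢
  intro h0
  exact hd (by rw [coeff_pderiv', h0, mul_zero])

private lemma not_dvd_pderiv' {K : Type} [Field K] {n : ℕ} {p : MvPolynomial (Fin n) K}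
    (i : Fin n) (hne : pderiv i p ≠ 0) : ¬ p ∣ pderiv i p := by
  rintro ⟨c, hc⟩
  have hp0 : p ≠ 0 := by rintro rfl; simp at hne
  have hc0 : c ≠ 0 := by rintro rfl; rw [mul_zero] at hc; exact hne hc
  let m : MonomialOrder (Fin n) := MonomialOrder.lex
  set D : (Fin n →₀ ℕ) → m.syn := ⇑m.toSyn with hD
  have hDinj : Function.Injective D := m.toSyn.injective
  have hadd : ∀ a b, D (a + b) = D a + D b := fun a b => map_add m.toSyn a b
  have hmul : AddMonoidAlgebra.supDegree D (p * c)
      = AddMonoidAlgebra.supDegree D p + AddMonoidAlgebra.supDegree D c := by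
    apply AddMonoidAlgebra.supDegree_mul hDinj hadd _ hp0 hc0
    exact mul_ne_zero ((AddMonoidAlgebra.leadingCoeff_ne_zero hDinj).mpr hp0)
      ((AddMonoidAlgebra.leadingCoeff_ne_zero hDinj).mpr hc0)
  have hlt : AddMonoidAlgebra.supDegree D (pderiv i p) < AddMonoidAlgebra.supDegree D p := by
    have hne' : (pderiv i p).support.Nonempty := support_nonempty.mpr hne
    obtain ⟨d0, hd0⟩ := hne'
    have hchain : ∀ d ∈ (pderiv i p).support, D d < AddMonoidAlgebra.supDegree D p := by
      intro d hd
      have h1 := support_pderiv_mem' hd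
      have h2 : d < d + Finsupp.single i 1 :=
        lt_add_of_pos_right d (lt_of_le_of_ne zero_le
          (fun h' => one_ne_zero (Finsupp.single_eq_zero.mp h'.symm)))
      calc D d < D (d + Finsupp.single i 1) := m.toSyn_strictMono h2
        _ ≤ _ := Finset.le_sup h1
    rw [AddMonoidAlgebra.supDegree]
    apply Finset.sup_lt_iff ?_ |>.mpr
    · exact hchain
    · exact bot_le.trans_lt (hchain d0 hd0)
  rw [hc, hmul] at hlt
  exact absurd hlt (not_lt.mpr (le_add_of_nonneg_right (by rw [← m.bot_eq_zero]; exact bot_le)))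

open Finsupp in
private lemma weight_neg' {n : ℕ} (u : Fin n → ℤ) (m : Fin n →₀ ℕ) :
    weight (-u) m = - weight u m := by
  simp [Finsupp.weight_apply, Finsupp.sum, Pi.neg_apply, smul_neg]

open Finsupp in
private lemma exists_top_component' {K : Type} [Field K] {n : ℕ} (u : Fin n → ℤ)
    {p : MvPolynomial (Fin n) K} (hp : p ≠ 0) :
    ∃ A : ℤ, weightedHomogeneousComponent u A p ≠ 0 ∧ ∀ m ∈ p.support, weight u m ≤ A := by
  have hs : p.support.Nonempty := support_nonempty.mpr hp
  refine ⟨p.support.sup' hs (weight u), ?_, fun m hm => Finset.le_sup' _ hm⟩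
  obtain ⟨m, hm, hEq⟩ := Finset.exists_mem_eq_sup' hs (weight u)
  intro h0
  have hco : coeff m (weightedHomogeneousComponent u (p.support.sup' hs (weight u)) p)
      = coeff m p := by
    rw [coeff_weightedHomogeneousComponent, if_pos hEq.symm]
  rw [h0, coeff_zero] at hco
  exact MvPolynomial.mem_support_iff.mp hm hco.symm

open Finsupp in
private lemma component_mul_of_bounds' {K : Type} [Field K] {n : ℕ} (u : Fin n → ℤ)
    {p q : MvPolynomial (Fin n) K} {A B : ℤ}
    (hp : ∀ m ∈ p.support, weight u m ≤ A) (hq : ∀ m ∈ q.support, weight u m ≤ B) :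
    weightedHomogeneousComponent u (A + B) (p * q) =
      weightedHomogeneousComponent u A p * weightedHomogeneousComponent u B q := by
  ext d
  rw [coeff_weightedHomogeneousComponent, MvPolynomial.coeff_mul, MvPolynomial.coeff_mul]
  by_cases hd : weight u d = A + B
  · rw [if_pos hd]
    apply Finset.sum_congr rfl
    rintro ⟨x, y⟩ hxy
    rw [Finset.HasAntidiagonal.mem_antidiagonal] at hxy
    rw [coeff_weightedHomogeneousComponent, coeff_weightedHomogeneousComponent]
    by_cases hx : coeff x p = 0
    · simp [hx]
    by_cases hy : coeff y q = 0
    · simp [hy]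
    have h1 : weight u x ≤ A := hp x (MvPolynomial.mem_support_iff.mpr hx)
    have h2 : weight u y ≤ B := hq y (MvPolynomial.mem_support_iff.mpr hy)
    have hsum : weight u x + weight u y = A + B := by
      rw [← map_add, hxy, hd]
    rw [if_pos (by omega : weight u x = A), if_pos (by omega : weight u y = B)]
  · rw [if_neg hd]
    symm
    apply Finset.sum_eq_zero
    rintro ⟨x, y⟩ hxy
    rw [Finset.HasAntidiagonal.mem_antidiagonal] at hxy
    rw [coeff_weightedHomogeneousComponent, coeff_weightedHomogeneousComponent]
    split_ifs with h1 h2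
    · exact absurd (by rw [← hxy, map_add, h1, h2]) hd
    · rw [mul_zero]
    · rw [zero_mul]
    · rw [zero_mul]

open Finsupp in
private lemma sup_eq_of_mul_homogeneous' {K : Type} [Field K] {n : ℕ} (u : Fin n → ℤ)
    {a b : MvPolynomial (Fin n) K} {d : ℤ}
    (ha : a ≠ 0) (hb : b ≠ 0) (h : IsWeightedHomogeneous u (a * b) d) :
    ∃ A B : ℤ, A + B = d ∧ weightedHomogeneousComponent u A a ≠ 0 ∧
      weightedHomogeneousComponent u B b ≠ 0 ∧
      (∀ m ∈ a.support, weight u m ≤ A) ∧ (∀ m ∈ b.support, weight u m ≤ B) := by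
  obtain ⟨A, hA0, hAle⟩ := exists_top_component' u ha
  obtain ⟨B, hB0, hBle⟩ := exists_top_component' u hb
  refine ⟨A, B, ?_, hA0, hB0, hAle, hBle⟩
  by_contra hne
  have h0 := h.weightedHomogeneousComponent_ne (A + B) hne
  rw [component_mul_of_bounds' u hAle hBle] at h0
  exact mul_ne_zero hA0 hB0 h0

open Finsupp in
private lemma component_ne_zero_attained {K : Type} [Field K] {n : ℕ} {u : Fin n → ℤ}
    {p : MvPolynomial (Fin n) K} {A : ℤ}
    (h : weightedHomogeneousComponent u A p ≠ 0) : ∃ m ∈ p.support, weight u m = A := by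
  obtain ⟨m, hm⟩ := MvPolynomial.ne_zero_iff.mp h
  rw [coeff_weightedHomogeneousComponent] at hm
  split_ifs at hm with hw
  · exact ⟨m, MvPolynomial.mem_support_iff.mpr hm, hw⟩
  · exact absurd rfl hm

open Finsupp in
private lemma homog_of_mul' {K : Type} [Field K] {n : ℕ} (u : Fin n → ℤ)
    {a b : MvPolynomial (Fin n) K} {d : ℤ}
    (ha : a ≠ 0) (hb : b ≠ 0) (h : IsWeightedHomogeneous u (a * b) d) :
    ∃ da : ℤ, IsWeightedHomogeneous u a da := by
  obtain ⟨A, B, hABd, hA0, hB0, hAle, hBle⟩ := sup_eq_of_mul_homogeneous' u ha hb h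
  have h' : IsWeightedHomogeneous (-u) (a * b) (-d) := by
    intro m hm
    rw [weight_neg', h hm]
  obtain ⟨A', B', hABd', hA0', hB0', hAle', hBle'⟩ := sup_eq_of_mul_homogeneous' (-u) ha hb h'
  obtain ⟨mA, hmA, hwA⟩ := component_ne_zero_attained hA0
  obtain ⟨mB, hmB, hwB⟩ := component_ne_zero_attained hB0
  have h1 : weight (-u) mA ≤ A' := hAle' mA hmA
  have h2 : weight (-u) mB ≤ B' := hBle' mB hmB
  rw [weight_neg', hwA] at h1
  rw [weight_neg', hwB] at h2
  -- h1 : -A ≤ A', h2 : -B ≤ B', A + B = d, A' + B' = -d ⇒ A' = -A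
  have hA'A : A' = -A := by omega
  refine ⟨A, fun m hm => ?_⟩
  have hle1 := hAle m (MvPolynomial.mem_support_iff.mpr hm)
  have hle2 := hAle' m (MvPolynomial.mem_support_iff.mpr hm)
  rw [weight_neg', hA'A] at hle2
  omega

private lemma wh_pow {K : Type} [Field K] {n : ℕ} {u : Fin n → ℤ}
    {p : MvPolynomial (Fin n) K} {d : ℤ}
    (h : IsWeightedHomogeneous u p d) (m : ℕ) : IsWeightedHomogeneous u (p ^ m) (m • d) := by
  induction m with
  | zero => rw [pow_zero, zero_smul]; exact isWeightedHomogeneous_one K u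
  | succ m ih =>
    rw [pow_succ, succ_nsmul]
    exact ih.mul h

/-- If `D(Q)` is a graded submodule of `Der_K(S)` for the
`(u,v)`-grading (`u + v = k·(1,…,1)`), then `Q` is quasi-homogeneous w.r.t. `u`. -/
theorem quasiHomogeneous_of_DQ_graded {K : Type} [Field K] [CharZero K] {n r : ℕ}
    (u v : Fin n → ℤ) (k : ℤ) (hu : ∀ i, 0 < u i) (huv : ∀ i, u i + v i = k)
    (Q : MvPolynomial (Fin n) K) (fi : Fin r → MvPolynomial (Fin n) K) (e : Fin r → ℕ)
    (hirr : ∀ i, Irreducible (fi i)) (hfac : Q = ∏ i, fi i ^ e i)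
    (hgraded : ∀ a ∈ DQ fi e, ∀ j : ℤ,
      (fun i => weightedHomogeneousComponent u (j - v i) (a i)) ∈ DQ fi e) :
    ∃ d : ℤ, Q.IsWeightedHomogeneous u d := by
  
  classical
  have hQ0 : Q ≠ 0 := by
    rw [hfac]
    exact Finset.prod_ne_zero_iff.mpr fun l _ => pow_ne_zero _ (hirr l).ne_zero
  obtain ⟨M, hQM0, hQMle⟩ := exists_top_component' u hQ0
  have hQMhom : IsWeightedHomogeneous u (weightedHomogeneousComponent u M Q) M :=
    weightedHomogeneousComponent_isWeightedHomogeneous M Q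
  have key : ∀ l : Fin r, ∃ dl : ℤ, IsWeightedHomogeneous u (fi l ^ e l) dl := by
    intro l
    rcases Nat.eq_zero_or_pos (e l) with he | he
    · exact ⟨0, by rw [he, pow_zero]; exact isWeightedHomogeneous_one K u⟩
    obtain ⟨i, hi⟩ := exists_pderiv_ne_zero' (hirr l)
    set a : Fin n → MvPolynomial (Fin n) K := fun i' => if i' = i then Q else 0 with hadef
    have ha : a ∈ DQ fi e := by
      rw [DQ, Submodule.mem_iInf]
      intro l'
      rw [Dgk, Submodule.mem_comap]
      have hder : derMap (fi l') a = Q * pderiv i (fi l') := by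
        simp only [derMap, LinearMap.coe_mk, AddHom.coe_mk]
        rw [Finset.sum_eq_single i]
        · simp [hadef]
        · intro j _ hj; simp [hadef, hj]
        · intro h; exact absurd (Finset.mem_univ i) h
      rw [hder]
      have hdvd : fi l' ^ e l' ∣ Q := by
        have := Finset.dvd_prod_of_mem (fun j => fi j ^ e j) (Finset.mem_univ l')
        rwa [← hfac] at this
      exact Ideal.mem_span_singleton.mpr (hdvd.mul_right _)
    have hb := hgraded a ha (M + v i)
    rw [DQ, Submodule.mem_iInf] at hb
    have hbl := hb l
    rw [Dgk, Submodule.mem_comap] at hbl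
    have hder : derMap (fi l) (fun i' => weightedHomogeneousComponent u (M + v i - v i') (a i'))
        = weightedHomogeneousComponent u M Q * pderiv i (fi l) := by
      simp only [derMap, LinearMap.coe_mk, AddHom.coe_mk]
      rw [Finset.sum_eq_single i]
      · simp only [hadef, if_pos rfl, add_sub_cancel_right]
      · intro j _ hj
        simp [hadef, hj]
      · intro h; exact absurd (Finset.mem_univ i) h
    rw [hder, Ideal.mem_span_singleton] at hbl
    have hfdvd : fi l ∣ weightedHomogeneousComponent u M Q * pderiv i (fi l) :=
      (dvd_pow_self (fi l) he.ne').trans hbl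
    have hprime : Prime (fi l) := UniqueFactorizationMonoid.irreducible_iff_prime.mp (hirr l)
    have hQMdvd : fi l ∣ weightedHomogeneousComponent u M Q := by
      rcases hprime.2.2 _ _ hfdvd with h | h
      · exact h
      · exact absurd h (not_dvd_pderiv' i hi)
    obtain ⟨c, hc⟩ := hQMdvd
    have hc0 : c ≠ 0 := by
      rintro rfl
      rw [mul_zero] at hc
      exact hQM0 hc
    obtain ⟨dl, hdl⟩ := homog_of_mul' u (hirr l).ne_zero hc0 (hc ▸ hQMhom)
    exact ⟨e l • dl, wh_pow hdl (e l)⟩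
  choose dl hdl using key
  refine ⟨∑ l, dl l, ?_⟩
  rw [hfac]
  exact IsWeightedHomogeneous.prod Finset.univ _ _ fun l _ => hdl l
end

section
/- Homogenization commutes with intersection of submodules: for S-submodules M, N of S^k, one has (M ∩ N)^h = M^h ∩ N^h in (S[h])^k, where M^h is the S[h]-submodule generated by the homogenizations m^h of all m ∈ M. -/
open MvPolynomial

/-- The (total) degree of a vector of polynomials. -/
noncomputable def vdeg {K : Type} [Field K] {n k : ℕ}
    (m : Fin k → MvPolynomial (Fin n) K) : ℕ :=
  Finset.univ.sup fun i => (m i).totalDegree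

/-- Homogenization `m^h` of a vector `m ∈ S^k` with respect to the extra variable `h`
(modelled by `S^h = S[h] = Polynomial S`): each coordinate is homogenized to the
degree of the vector. -/
noncomputable def homVec {K : Type} [Field K] {n k : ℕ}
    (m : Fin k → MvPolynomial (Fin n) K) : Fin k → Polynomial (MvPolynomial (Fin n) K) :=
  fun i => ∑ t ∈ Finset.range ((m i).totalDegree + 1),
    Polynomial.C (homogeneousComponent t (m i)) * Polynomial.X ^ (vdeg m - t)

/-- The homogenization `M^h` of a submodule `M ⊆ S^k`: the `S^h`-submodule of `(S^h)^k`
generated by the homogenizations of all elements of `M`. -/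
noncomputable def homSub {K : Type} [Field K] {n k : ℕ}
    (M : Submodule (MvPolynomial (Fin n) K) (Fin k → MvPolynomial (Fin n) K)) :
    Submodule (Polynomial (MvPolynomial (Fin n) K))
      (Fin k → Polynomial (MvPolynomial (Fin n) K)) :=
  Submodule.span _ (homVec '' (M : Set (Fin k → MvPolynomial (Fin n) K)))

namespace HomSubAux

variable {K : Type} [Field K] {n k : ℕ}

/-- The degree-`d` homogeneous component of an element of `S[h]`, where a term
`C q * X^j` with `q` homogeneous of degree `a` has degree `a + j`. -/
noncomputable def hcomp (d : ℕ) :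
    Polynomial (MvPolynomial (Fin n) K) →+ Polynomial (MvPolynomial (Fin n) K) where
  toFun p := ∑ j ∈ Finset.range (d + 1),
      Polynomial.C (homogeneousComponent (d - j) (p.coeff j)) * Polynomial.X ^ j
  map_zero' := by simp
  map_add' p q := by
    simp only [Polynomial.coeff_add, map_add, Polynomial.C_add, add_mul,
      Finset.sum_add_distrib]

lemma coeff_hcomp (d : ℕ) (p : Polynomial (MvPolynomial (Fin n) K)) (j : ℕ) :
    (hcomp d p).coeff j =
      if j ≤ d then homogeneousComponent (d - j) (p.coeff j) else 0 := by
  have : hcomp d p = ∑ j ∈ Finset.range (d + 1),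
      Polynomial.C (homogeneousComponent (d - j) (p.coeff j)) * Polynomial.X ^ j := rfl
  rw [this, Polynomial.finset_sum_coeff]
  simp only [Polynomial.coeff_C_mul, Polynomial.coeff_X_pow, mul_ite, mul_one, mul_zero,
    Finset.sum_ite_eq, Finset.mem_range, Nat.lt_succ_iff]

lemma hcomp_hcomp (d : ℕ) (p : Polynomial (MvPolynomial (Fin n) K)) :
    hcomp d (hcomp d p) = hcomp d p := by
  apply Polynomial.ext; intro j
  rw [coeff_hcomp, coeff_hcomp]
  split_ifs with h
  · exact (homogeneousComponent_of_mem
      (homogeneousComponent_mem (d - j) (p.coeff j))).trans (if_pos rfl)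
  · rfl

lemma hcomp_monomial (d i : ℕ) (a : MvPolynomial (Fin n) K) :
    hcomp d (Polynomial.monomial i a) =
      if i ≤ d then Polynomial.monomial i (homogeneousComponent (d - i) a) else 0 := by
  apply Polynomial.ext; intro j
  rw [coeff_hcomp, Polynomial.coeff_monomial]
  split_ifs <;> simp_all [Polynomial.coeff_monomial] <;> (try split_ifs) <;>
    first | rfl | omega | (intro; omega)

lemma homogeneousComponent_monomial_mul (t : ℕ) (u : Fin n →₀ ℕ) (r : K)
    (q : MvPolynomial (Fin n) K) :
    homogeneousComponent t (monomial u r * q) =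
      if u.degree ≤ t then monomial u r * homogeneousComponent (t - u.degree) q else 0 := by
  conv_lhs => rw [← sum_homogeneousComponent q, Finset.mul_sum]
  rw [map_sum]
  have key : ∀ s : ℕ, homogeneousComponent t (monomial u r * homogeneousComponent s q) =
      if t = u.degree + s then monomial u r * homogeneousComponent s q else 0 := fun s =>
    homogeneousComponent_of_mem ((mem_homogeneousSubmodule _ _).mpr
      ((isHomogeneous_monomial r rfl).mul (homogeneousComponent_isHomogeneous s q)))
  simp_rw [key]
  rcases le_or_gt u.degree t with h | h
  · have hcongr : ∀ s ∈ Finset.range (q.totalDegree + 1),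
        (if t = u.degree + s then monomial u r * homogeneousComponent s q else 0) =
        (if t - u.degree = s then monomial u r * homogeneousComponent s q else 0) := by
      intro s _
      by_cases hs : t = u.degree + s
      · rw [if_pos hs, if_pos (by omega)]
      · rw [if_neg hs, if_neg (by omega)]
    rw [Finset.sum_congr rfl hcongr, Finset.sum_ite_eq, if_pos h]
    by_cases hm : t - u.degree ∈ Finset.range (q.totalDegree + 1)
    · rw [if_pos hm]
    · rw [if_neg hm, homogeneousComponent_eq_zero, mul_zero]
      simp only [Finset.mem_range, Nat.lt_succ_iff, not_le] at hm
      omega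
  · rw [if_neg (by omega), Finset.sum_eq_zero]
    intro s _
    rw [if_neg (by omega)]

lemma hcomp_monomial_mul (d i : ℕ) (u : Fin n →₀ ℕ) (r : K)
    (p : Polynomial (MvPolynomial (Fin n) K)) :
    hcomp d (Polynomial.monomial i (monomial u r) * p) =
      if i + u.degree ≤ d then
        Polynomial.monomial i (monomial u r) * hcomp (d - i - u.degree) p else 0 := by
  have hmul : ∀ (q : Polynomial (MvPolynomial (Fin n) K)) (j : ℕ),
      (Polynomial.monomial i (monomial u r) * q).coeff j
        = if i ≤ j then monomial u r * q.coeff (j - i) else 0 := by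
    intro q j
    rw [← Polynomial.C_mul_X_pow_eq_monomial, mul_right_comm, Polynomial.coeff_mul_X_pow']
    split_ifs with h
    · rw [Polynomial.coeff_C_mul]
    · rfl
  apply Polynomial.ext; intro j
  rw [coeff_hcomp, hmul, apply_ite (homogeneousComponent (d - j)), map_zero,
    homogeneousComponent_monomial_mul,
    apply_ite (fun q : Polynomial (MvPolynomial (Fin n) K) => q.coeff j),
    Polynomial.coeff_zero, hmul, coeff_hcomp]
  split_ifs <;>
    first
      | rfl
      | omega
      | (rw [show d - j - u.degree = d - i - u.degree - (j - i) from by omega])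
      | simp

lemma hcomp_homVec (g : Fin k → MvPolynomial (Fin n) K) (d : ℕ) (i : Fin k) :
    hcomp d (homVec g i) = if d = vdeg g then homVec g i else 0 := by
  have htd : (g i).totalDegree ≤ vdeg g :=
    Finset.le_sup (f := fun i => (g i).totalDegree) (Finset.mem_univ i)
  have hterm : ∀ t, t ≤ (g i).totalDegree →
      hcomp d (Polynomial.C (homogeneousComponent t (g i)) * Polynomial.X ^ (vdeg g - t)) =
      if d = vdeg g then
        Polynomial.C (homogeneousComponent t (g i)) * Polynomial.X ^ (vdeg g - t)
      else 0 := by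
    intro t ht
    rw [Polynomial.C_mul_X_pow_eq_monomial, hcomp_monomial]
    by_cases hd : d = vdeg g
    · subst hd
      rw [if_pos (by omega), if_pos rfl, show vdeg g - (vdeg g - t) = t from by omega,
        homogeneousComponent_of_mem (homogeneousComponent_mem t (g i)), if_pos rfl]
    · rw [if_neg hd]
      split_ifs with h1
      · rw [homogeneousComponent_of_mem (homogeneousComponent_mem t (g i)),
          if_neg (by omega), Polynomial.monomial_zero_right]
      · rfl
  show hcomp d (∑ t ∈ Finset.range ((g i).totalDegree + 1),
      Polynomial.C (homogeneousComponent t (g i)) * Polynomial.X ^ (vdeg g - t)) = _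
  rw [map_sum]
  by_cases hd : d = vdeg g
  · rw [if_pos hd]
    show _ = ∑ t ∈ Finset.range ((g i).totalDegree + 1),
      Polynomial.C (homogeneousComponent t (g i)) * Polynomial.X ^ (vdeg g - t)
    refine Finset.sum_congr rfl fun t ht => ?_
    rw [hterm t (by simpa [Nat.lt_succ_iff] using Finset.mem_range.mp ht), if_pos hd]
  · rw [if_neg hd]
    refine Finset.sum_eq_zero fun t ht => ?_
    rw [hterm t (by simpa [Nat.lt_succ_iff] using Finset.mem_range.mp ht), if_neg hd]

lemma sum_hcomp (p : Polynomial (MvPolynomial (Fin n) K)) {D : ℕ}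
    (hD : ∀ j, p.coeff j ≠ 0 → j + (p.coeff j).totalDegree < D) :
    ∑ d ∈ Finset.range D, hcomp d p = p := by
  apply Polynomial.ext; intro j
  rw [Polynomial.finset_sum_coeff]
  simp_rw [coeff_hcomp]
  rcases eq_or_ne (p.coeff j) 0 with h0 | h0
  · rw [h0]
    exact Finset.sum_eq_zero fun d _ => by split_ifs <;> simp
  · have hj := hD j h0
    have hfil : (Finset.range D).filter (fun d => j ≤ d) = Finset.Ico j D := by
      ext d
      simp only [Finset.mem_filter, Finset.mem_range, Finset.mem_Ico]
      omega
    rw [← Finset.sum_filter, hfil, Finset.sum_Ico_eq_sum_range]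
    simp_rw [add_tsub_cancel_left]
    conv_rhs => rw [← sum_homogeneousComponent (p.coeff j)]
    symm
    apply Finset.sum_subset
    · apply Finset.range_subset_range.mpr
      omega
    · intro t _ ht
      apply homogeneousComponent_eq_zero
      simp only [Finset.mem_range, Nat.lt_succ_iff, not_le, not_lt] at ht ⊢
      omega

lemma hvcomp_mem {M : Submodule (MvPolynomial (Fin n) K) (Fin k → MvPolynomial (Fin n) K)}
    {f : Fin k → Polynomial (MvPolynomial (Fin n) K)} (hf : f ∈ homSub M) (d : ℕ) :
    (fun i => hcomp d (f i)) ∈ homSub M := by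
  revert d
  induction hf using Submodule.span_induction with
  | mem x hx =>
    obtain ⟨g, hg, rfl⟩ := hx
    intro d
    have hx : (fun i => hcomp d (homVec g i)) = if d = vdeg g then homVec g else 0 := by
      funext i
      rw [hcomp_homVec]
      split_ifs <;> simp
    rw [hx]
    split_ifs
    · exact Submodule.subset_span ⟨g, hg, rfl⟩
    · exact Submodule.zero_mem _
  | zero =>
    intro d
    have h0 : (fun i => hcomp d ((0 : Fin k → Polynomial (MvPolynomial (Fin n) K)) i)) = 0 := by
      funext i; simp
    rw [h0]; exact Submodule.zero_mem _
  | add x y hx hy ihx ihy =>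
    intro d
    have hxy : (fun i => hcomp d ((x + y) i))
        = (fun i => hcomp d (x i)) + fun i => hcomp d (y i) := by
      funext i; simp
    rw [hxy]; exact Submodule.add_mem _ (ihx d) (ihy d)
  | smul c x hx ihx =>
    induction c using Polynomial.induction_on' with
    | add p q hp hq =>
      intro d
      have heq : (fun i => hcomp d (((p + q) • x) i))
          = (fun i => hcomp d ((p • x) i)) + fun i => hcomp d ((q • x) i) := by
        funext i
        simp only [Pi.smul_apply, smul_eq_mul, Pi.add_apply, add_mul, map_add]
      rw [heq]
      exact Submodule.add_mem _ (hp d) (hq d)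
    | monomial m a =>
      induction a using MvPolynomial.induction_on' with
      | monomial u r =>
        intro d
        have hx2 : (fun i => hcomp d ((Polynomial.monomial m (monomial u r) • x) i))
            = if m + u.degree ≤ d then
                Polynomial.monomial m (monomial u r) •
                  fun i => hcomp (d - m - u.degree) (x i)
              else 0 := by
          funext i
          simp only [Pi.smul_apply, smul_eq_mul]
          rw [hcomp_monomial_mul]
          split_ifs <;> simp
        rw [hx2]
        split_ifs
        · exact Submodule.smul_mem _ _ (ihx _)
        · exact Submodule.zero_mem _
      | add p q hp hq =>
        intro d
        have heq : (fun i => hcomp d ((Polynomial.monomial m (p + q) • x) i))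
            = (fun i => hcomp d ((Polynomial.monomial m p • x) i))
              + fun i => hcomp d ((Polynomial.monomial m q • x) i) := by
          funext i
          simp only [Pi.smul_apply, smul_eq_mul, map_add, add_mul, Pi.add_apply]
        rw [heq]
        exact Submodule.add_mem _ (hp d) (hq d)

lemma eval_one_mem {M : Submodule (MvPolynomial (Fin n) K) (Fin k → MvPolynomial (Fin n) K)}
    {f : Fin k → Polynomial (MvPolynomial (Fin n) K)} (hf : f ∈ homSub M) :
    (fun i => Polynomial.eval 1 (f i)) ∈ M := by
  refine Submodule.span_induction
    (p := fun x _ => (fun i => Polynomial.eval 1 (x i)) ∈ M) ?_ ?_ ?_ ?_ hf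
  · rintro x ⟨g, hg, rfl⟩
    have hg' : (fun i => Polynomial.eval 1 (homVec g i)) = g := by
      funext i
      show Polynomial.eval 1 (∑ t ∈ Finset.range ((g i).totalDegree + 1),
        Polynomial.C (homogeneousComponent t (g i)) * Polynomial.X ^ (vdeg g - t)) = g i
      rw [Polynomial.eval_finset_sum]
      simp only [Polynomial.eval_mul, Polynomial.eval_C, Polynomial.eval_pow,
        Polynomial.eval_X, one_pow, mul_one]
      exact sum_homogeneousComponent _
    rw [hg']; exact hg
  · show (fun i => Polynomial.eval 1
        ((0 : Fin k → Polynomial (MvPolynomial (Fin n) K)) i)) ∈ M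
    have h0 : (fun i => Polynomial.eval 1
        ((0 : Fin k → Polynomial (MvPolynomial (Fin n) K)) i)) = 0 := by
      funext i; simp
    rw [h0]; exact M.zero_mem
  · intro x y _ _ ihx ihy
    have hxy : (fun i => Polynomial.eval 1 ((x + y) i))
        = (fun i => Polynomial.eval 1 (x i)) + fun i => Polynomial.eval 1 (y i) := by
      funext i; simp
    rw [hxy]; exact M.add_mem ihx ihy
  · intro c x _ ihx
    have hcx : (fun i => Polynomial.eval 1 ((c • x) i))
        = Polynomial.eval 1 c • fun i => Polynomial.eval 1 (x i) := by
      funext i; simp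
    rw [hcx]; exact M.smul_mem _ ihx

lemma homog_eq_smul_homVec (d : ℕ) (f : Fin k → Polynomial (MvPolynomial (Fin n) K))
    (hf : ∀ i, hcomp d (f i) = f i) :
    f = (Polynomial.X : Polynomial (MvPolynomial (Fin n) K)) ^
          (d - vdeg (fun i => Polynomial.eval 1 (f i))) •
        homVec (fun i => Polynomial.eval 1 (f i)) := by
  have hco : ∀ i j, (f i).coeff j =
      if j ≤ d then homogeneousComponent (d - j) ((f i).coeff j) else 0 := by
    intro i j
    conv_lhs => rw [← hf i, coeff_hcomp]
  have hmem : ∀ i j, j ≤ d →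
      (f i).coeff j ∈ homogeneousSubmodule (Fin n) K (d - j) := by
    intro i j h
    rw [hco i j, if_pos h]
    exact homogeneousComponent_mem _ _
  have hnat : ∀ i, (f i).natDegree ≤ d := by
    intro i
    refine Polynomial.natDegree_le_iff_coeff_eq_zero.mpr fun m hm => ?_
    rw [hco i m, if_neg (by omega)]
  have hgsum : ∀ i, Polynomial.eval 1 (f i) = ∑ j ∈ Finset.range (d + 1), (f i).coeff j := by
    intro i
    rw [Polynomial.eval_eq_sum_range' (Nat.lt_succ_of_le (hnat i))]
    simp
  have hghom : ∀ i t, homogeneousComponent t (Polynomial.eval 1 (f i)) =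
      if t ≤ d then (f i).coeff (d - t) else 0 := by
    intro i t
    rw [hgsum i, map_sum]
    by_cases ht : t ≤ d
    · rw [if_pos ht]
      have hc : ∀ j ∈ Finset.range (d + 1),
          homogeneousComponent t ((f i).coeff j) =
            if j = d - t then (f i).coeff j else 0 := by
        intro j hj
        simp only [Finset.mem_range, Nat.lt_succ_iff] at hj
        rw [homogeneousComponent_of_mem (hmem i j hj)]
        by_cases h1 : t = d - j
        · rw [if_pos h1, if_pos (by omega)]
        · rw [if_neg h1, if_neg (by omega)]
      rw [Finset.sum_congr rfl hc, Finset.sum_ite_eq' (Finset.range (d + 1)) (d - t),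
        if_pos (Finset.mem_range.mpr (by omega))]
    · rw [if_neg ht, Finset.sum_eq_zero]
      intro j hj
      simp only [Finset.mem_range, Nat.lt_succ_iff] at hj
      rw [homogeneousComponent_of_mem (hmem i j hj), if_neg (by omega)]
  have htdg : ∀ i, (Polynomial.eval 1 (f i)).totalDegree ≤ d := by
    intro i
    rw [hgsum i]
    refine le_trans (totalDegree_finset_sum _ _) (Finset.sup_le fun j hj => ?_)
    simp only [Finset.mem_range, Nat.lt_succ_iff] at hj
    exact le_trans ((mem_homogeneousSubmodule _ _).mp (hmem i j hj)).totalDegree_le (by omega)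
  have hVd : vdeg (fun i => Polynomial.eval 1 (f i)) ≤ d := Finset.sup_le fun i _ => htdg i
  funext i
  have hVi : (Polynomial.eval 1 (f i)).totalDegree ≤ vdeg (fun i => Polynomial.eval 1 (f i)) :=
    Finset.le_sup (f := fun i => (Polynomial.eval 1 (f i)).totalDegree) (Finset.mem_univ i)
  rw [Pi.smul_apply, smul_eq_mul]
  show f i = Polynomial.X ^ (d - vdeg (fun i => Polynomial.eval 1 (f i))) *
    ∑ t ∈ Finset.range ((Polynomial.eval 1 (f i)).totalDegree + 1),
      Polynomial.C (homogeneousComponent t (Polynomial.eval 1 (f i))) *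
        Polynomial.X ^ (vdeg (fun i => Polynomial.eval 1 (f i)) - t)
  rw [Finset.mul_sum]
  have hterm : ∀ t ∈ Finset.range ((Polynomial.eval 1 (f i)).totalDegree + 1),
      Polynomial.X ^ (d - vdeg (fun i => Polynomial.eval 1 (f i))) *
        (Polynomial.C (homogeneousComponent t (Polynomial.eval 1 (f i))) *
          Polynomial.X ^ (vdeg (fun i => Polynomial.eval 1 (f i)) - t))
      = Polynomial.C (homogeneousComponent t (Polynomial.eval 1 (f i))) *
          Polynomial.X ^ (d - t) := by
    intro t ht
    simp only [Finset.mem_range, Nat.lt_succ_iff] at ht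
    rw [mul_left_comm, ← pow_add,
      show d - vdeg (fun i => Polynomial.eval 1 (f i)) +
        (vdeg (fun i => Polynomial.eval 1 (f i)) - t) = d - t from by omega]
  rw [Finset.sum_congr rfl hterm]
  rw [Finset.sum_subset
    (Finset.range_subset_range.mpr (by omega : (Polynomial.eval 1 (f i)).totalDegree + 1 ≤ d + 1))
    (fun t _ ht => by
      rw [homogeneousComponent_eq_zero _ _ (by
        simp only [Finset.mem_range, Nat.lt_succ_iff, not_le] at ht
        omega), map_zero, zero_mul])]
  rw [Finset.sum_congr rfl (fun t ht => by
    rw [hghom i t, if_pos (by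
      simp only [Finset.mem_range, Nat.lt_succ_iff] at ht
      omega)])]
  have hrefl := Finset.sum_range_reflect
    (fun j => Polynomial.C ((f i).coeff j) * Polynomial.X ^ j) (d + 1)
  simp only [Nat.add_sub_cancel] at hrefl
  rw [hrefl]
  conv_lhs => rw [Polynomial.as_sum_range' (f i) (d + 1) (Nat.lt_succ_of_le (hnat i))]
  exact Finset.sum_congr rfl fun j _ => (Polynomial.C_mul_X_pow_eq_monomial).symm

end HomSubAux

open HomSubAux in
/-- Homogenization commutes with intersections of submodules:
`(M ∩ N)^h = M^h ∩ N^h`. -/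
theorem homSub_inf {K : Type} [Field K] {n k : ℕ}
    (M N : Submodule (MvPolynomial (Fin n) K) (Fin k → MvPolynomial (Fin n) K)) :
    homSub (M ⊓ N) = homSub M ⊓ homSub N := by
  apply le_antisymm
  · apply le_inf <;> (apply Submodule.span_le.mpr; rintro _ ⟨g, hg, rfl⟩)
    · exact Submodule.subset_span ⟨g, hg.1, rfl⟩
    · exact Submodule.subset_span ⟨g, hg.2, rfl⟩
  · rintro f ⟨hfM, hfN⟩
    set D : ℕ := 1 + Finset.univ.sup
      (fun i => ((f i).support).sup fun j => j + ((f i).coeff j).totalDegree) with hDdef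
    have hsum : f = ∑ d ∈ Finset.range D, (fun i => hcomp d (f i)) := by
      funext i
      rw [Finset.sum_apply]
      refine (sum_hcomp (f i) ?_).symm
      intro j hj
      have h1 : j + ((f i).coeff j).totalDegree ≤
          ((f i).support).sup (fun j => j + ((f i).coeff j).totalDegree) :=
        Finset.le_sup (f := fun j => j + ((f i).coeff j).totalDegree)
          (Polynomial.mem_support_iff.mpr hj)
      have h2 : ((f i).support).sup (fun j => j + ((f i).coeff j).totalDegree) ≤
          Finset.univ.sup
            (fun i => ((f i).support).sup fun j => j + ((f i).coeff j).totalDegree) :=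
        Finset.le_sup (f := fun i => ((f i).support).sup fun j => j + ((f i).coeff j).totalDegree)
          (Finset.mem_univ i)
      omega
    rw [hsum]
    apply Submodule.sum_mem
    intro d _
    have h1 : (fun i => hcomp d (f i)) ∈ homSub M := hvcomp_mem hfM d
    have h2 : (fun i => hcomp d (f i)) ∈ homSub N := hvcomp_mem hfN d
    have hσ : (fun i => Polynomial.eval 1 (hcomp d (f i))) ∈ M ⊓ N :=
      ⟨eval_one_mem h1, eval_one_mem h2⟩
    have key := homog_eq_smul_homVec d (fun i => hcomp d (f i))
      (fun i => hcomp_hcomp d (f i))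
    rw [key]
    exact Submodule.smul_mem _ _ (Submodule.subset_span ⟨_, hσ, rfl⟩)
end

section
/- For any polynomial f ∈ S = K[x_1,...,x_n], one has D(f^h) ∩ S^h⟨∂_{x_1},...,∂_{x_n}⟩ = D(f)^h, where f^h ∈ S^h = K[x_1,...,x_n,h] is the homogenization of f, D(f^h) is computed in Der_K(S^h), and D(f)^h is the homogenization of the submodule D(f) ⊆ S^h⟨∂_{x_1},...,∂_{x_n}⟩. -/
open MvPolynomial

/-- The degree-`m` graded piece (a `K`-vector space) of a submodule `M` of
`Der_K(S) = ⊕ᵢ S^u(-vᵢ)` for the `(u,v)`-grading. -/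
noncomputable def gPiece {K : Type} [Field K] {n : ℕ} (u v : Fin n → ℤ)
    (M : Submodule (MvPolynomial (Fin n) K) (Fin n → MvPolynomial (Fin n) K)) (m : ℤ) :
    Submodule K (Fin n → MvPolynomial (Fin n) K) :=
  Submodule.restrictScalars K M ⊓
    Submodule.pi Set.univ (fun i => weightedHomogeneousSubmodule K u (m - v i))

/-- The Hilbert function `m ↦ dim_K Mₘ` of a `(u,v)`-graded submodule of `Der_K(S)`. -/
noncomputable def hpDer {K : Type} [Field K] {n : ℕ} (u v : Fin n → ℤ)
    (M : Submodule (MvPolynomial (Fin n) K) (Fin n → MvPolynomial (Fin n) K)) (m : ℤ) : ℤ :=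
  (Module.finrank K ↥(gPiece u v M m) : ℤ)

/-- `χ` of a Laurent polynomial `Σ aₘ tᵐ` given by its (finitely supported)
coefficient function: the derivative at `t = 1`, namely `Σ m·aₘ`. -/
noncomputable def chi (c : ℤ →₀ ℤ) : ℤ := c.sum fun m a => m * a

/-- `c` is the coefficient function of `∏ᵢ(1-t^{uᵢ})·F(t)` where `F(t) = Σ F(m) tᵐ`. -/
def numRel {n : ℕ} (u : Fin n → ℤ) (c : ℤ →₀ ℤ) (F : ℤ → ℤ) : Prop :=
  ∀ m : ℤ, c m = ∑ A : Finset (Fin n), (-1 : ℤ) ^ A.card * F (m - ∑ i ∈ A, u i)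

/-- Homogenization `f^h ∈ S^h = K[x₁,…,xₙ,h]` of `f ∈ S = K[x₁,…,xₙ]`
(the last variable of `Fin (n+1)` plays the role of `h`). -/
noncomputable def polyHom {K : Type} [Field K] {n : ℕ} (f : MvPolynomial (Fin n) K) :
    MvPolynomial (Fin (n + 1)) K :=
  ∑ t ∈ Finset.range (f.totalDegree + 1),
    rename Fin.castSucc (homogeneousComponent t f) * X (Fin.last n) ^ (f.totalDegree - t)

/-- The degree of a vector of polynomials. -/
noncomputable def vdegD {K : Type} [Field K] {n : ℕ} (a : Fin n → MvPolynomial (Fin n) K) : ℕ :=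
  Finset.univ.sup fun i => (a i).totalDegree

/-- Homogenization `δ^h = Σ aᵢ^h ∂ᵢ` of a derivation `δ = Σ aᵢ ∂ᵢ` of `S`, viewed as a
derivation of `S^h` (with zero `∂_h`-component); each coefficient is homogenized to the
common degree of the vector. -/
noncomputable def derHom {K : Type} [Field K] {n : ℕ} (a : Fin n → MvPolynomial (Fin n) K) :
    Fin (n + 1) → MvPolynomial (Fin (n + 1)) K :=
  fun i =>
    if h : (i : ℕ) < n then
      ∑ t ∈ Finset.range ((a (i.castLT h)).totalDegree + 1),
        rename Fin.castSucc (homogeneousComponent t (a (i.castLT h))) *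
          X (Fin.last n) ^ (vdegD a - t)
    else 0

/-- The `S^h`-submodule `S^h⟨∂_{x₁},…,∂_{xₙ}⟩` of derivations with no `∂_h`-component. -/
noncomputable def noLast {K : Type} [Field K] (n : ℕ) :
    Submodule (MvPolynomial (Fin (n + 1)) K) (Fin (n + 1) → MvPolynomial (Fin (n + 1)) K) :=
  LinearMap.ker (LinearMap.proj (Fin.last n))


namespace DQHom


variable {K : Type} [Field K] {n : ℕ}

/-- Dehomogenization: substitute `1` for the last variable. -/
noncomputable def dh : MvPolynomial (Fin (n+1)) K →ₐ[K] MvPolynomial (Fin n) K :=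
  aeval (Fin.snoc X 1)

lemma dh_rename (p : MvPolynomial (Fin n) K) : dh (rename Fin.castSucc p) = p := by
  rw [dh, aeval_rename]
  have : (Fin.snoc X (1 : MvPolynomial (Fin n) K)) ∘ Fin.castSucc = X := by
    funext j; simp
  rw [this, aeval_X_left, AlgHom.id_apply]

lemma dh_X_last : dh (X (Fin.last n) : MvPolynomial (Fin (n+1)) K) = 1 := by
  simp [dh]

/-- Homogenization to degree `M`, as a `K`-linear map. -/
noncomputable def homL (M : ℕ) : MvPolynomial (Fin n) K →ₗ[K] MvPolynomial (Fin (n+1)) K :=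
  ∑ t ∈ Finset.range (M+1),
    (LinearMap.mulRight K ((X (Fin.last n) : MvPolynomial (Fin (n+1)) K) ^ (M - t))) ∘ₗ
      ((rename (Fin.castSucc) : MvPolynomial (Fin n) K →ₐ[K] MvPolynomial (Fin (n+1)) K).toLinearMap ∘ₗ
        (homogeneousComponent t))

lemma homL_apply (M : ℕ) (p : MvPolynomial (Fin n) K) :
    homL M p = ∑ t ∈ Finset.range (M+1),
      rename Fin.castSucc (homogeneousComponent t p) * X (Fin.last n) ^ (M - t) := by
  simp [homL, LinearMap.sum_apply, LinearMap.mulRight_apply]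

lemma homL_eq_of_le {p : MvPolynomial (Fin n) K} {M : ℕ} (h : p.totalDegree ≤ M) :
    homL M p = ∑ t ∈ Finset.range (p.totalDegree + 1),
      rename Fin.castSucc (homogeneousComponent t p) * X (Fin.last n) ^ (M - t) := by
  rw [homL_apply, eq_comm]
  apply Finset.sum_subset
  · intro t ht
    simp only [Finset.mem_range] at *
    omega
  · intro t _ ht
    simp only [Finset.mem_range, not_lt] at ht
    rw [homogeneousComponent_eq_zero _ _ (by omega), map_zero, zero_mul]

lemma dh_homL {p : MvPolynomial (Fin n) K} {M : ℕ} (h : p.totalDegree ≤ M) :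
    dh (homL M p) = p := by
  rw [homL_apply, map_sum]
  have : ∀ t ∈ Finset.range (M+1),
      dh (rename Fin.castSucc (homogeneousComponent t p) * X (Fin.last n) ^ (M - t))
        = homogeneousComponent t p := by
    intro t _
    rw [map_mul, map_pow, dh_X_last, one_pow, mul_one, dh_rename]
  rw [Finset.sum_congr rfl this]
  have key : ∑ t ∈ Finset.range (p.totalDegree + 1), homogeneousComponent t p
      = ∑ t ∈ Finset.range (M+1), homogeneousComponent t p := by
    apply Finset.sum_subset
    · intro t ht; simp only [Finset.mem_range] at *; omega
    · intro t _ ht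
      simp only [Finset.mem_range, not_lt] at ht
      exact homogeneousComponent_eq_zero _ _ (by omega)
  rw [← key, sum_homogeneousComponent]

lemma homL_isHomogeneous (M : ℕ) (p : MvPolynomial (Fin n) K) :
    (homL M p).IsHomogeneous M := by
  rw [← mem_homogeneousSubmodule, homL_apply]
  apply Submodule.sum_mem
  intro t ht
  simp only [Finset.mem_range] at ht
  rw [mem_homogeneousSubmodule]
  have h1 : (rename (Fin.castSucc) (homogeneousComponent t p)
      : MvPolynomial (Fin (n+1)) K).IsHomogeneous t :=
    (homogeneousComponent_isHomogeneous t p).rename_isHomogeneous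
  have h2 : ((X (Fin.last n) : MvPolynomial (Fin (n+1)) K) ^ (M - t)).IsHomogeneous (M - t) := by
    simpa using (isHomogeneous_X K (Fin.last n)).pow (M - t)
  have := h1.mul h2
  rwa [show t + (M - t) = M by omega] at this


lemma degree_univ {σ : Type*} [Fintype σ] (d : σ →₀ ℕ) : d.degree = ∑ i, d i :=
  Finset.sum_subset (Finset.subset_univ _) (fun _ _ h => Finsupp.notMem_support_iff.mp h)

/-- restriction of an exponent vector to the first `n` variables -/
noncomputable def rst (μ : Fin (n+1) →₀ ℕ) : Fin n →₀ ℕ :=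
  Finsupp.equivFunOnFinite.symm (fun j => μ (Fin.castSucc j))

@[simp] lemma rst_apply (μ : Fin (n+1) →₀ ℕ) (j : Fin n) : rst μ j = μ (Fin.castSucc j) := rfl

lemma rst_recon (μ : Fin (n+1) →₀ ℕ) :
    Finsupp.mapDomain Fin.castSucc (rst μ) + Finsupp.single (Fin.last n) (μ (Fin.last n)) = μ := by
  ext i
  induction i using Fin.lastCases with
  | last =>
      rw [Finsupp.add_apply, Finsupp.mapDomain_notin_range, Finsupp.single_eq_same, zero_add]
      rintro ⟨j, hj⟩
      exact absurd hj (Fin.ne_of_lt (Fin.castSucc_lt_last j))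
  | cast j =>
      rw [Finsupp.add_apply, Finsupp.mapDomain_apply (Fin.castSucc_injective n), rst_apply,
        Finsupp.single_apply, if_neg (Fin.ne_of_lt (Fin.castSucc_lt_last j)).symm, add_zero]

lemma rst_degree (μ : Fin (n+1) →₀ ℕ) : (rst μ).degree + μ (Fin.last n) = μ.degree := by
  rw [degree_univ, degree_univ, Fin.sum_univ_castSucc]
  simp

lemma dh_monomial (μ : Fin (n+1) →₀ ℕ) (c : K) :
    dh (monomial μ c) = monomial (rst μ) c := by
  rw [dh, aeval_monomial, monomial_eq, Finsupp.prod_fintype _ _ (fun i => pow_zero _),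
    Finsupp.prod_fintype _ _ (fun i => pow_zero _), Fin.prod_univ_castSucc]
  simp [algebraMap_eq]

lemma homL_dh_monomial {μ : Fin (n+1) →₀ ℕ} {c : K} {M : ℕ} (hd : μ.degree = M) :
    homL M (dh (monomial μ c)) = monomial μ c := by
  have hA : (rst μ).degree ≤ M := by have := rst_degree μ; omega
  have hmem : (monomial (rst μ) c : MvPolynomial (Fin n) K)
      ∈ homogeneousSubmodule (Fin n) K ((rst μ).degree) :=
    (mem_homogeneousSubmodule _ _).2 (isHomogeneous_monomial _ rfl)
  rw [dh_monomial, homL_apply]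
  have : ∀ t ∈ Finset.range (M+1),
      rename Fin.castSucc (homogeneousComponent t (monomial (rst μ) c)) * X (Fin.last n) ^ (M - t)
      = if t = (rst μ).degree then
          rename Fin.castSucc (monomial (rst μ) c : MvPolynomial (Fin n) K)
            * X (Fin.last n) ^ (M - t) else 0 := by
    intro t _
    rw [homogeneousComponent_of_mem hmem]
    split_ifs with h
    · rfl
    · simp
  rw [Finset.sum_congr rfl this, Finset.sum_ite_eq' (Finset.range (M+1)) ((rst μ).degree),
    if_pos (Finset.mem_range.2 (by omega))]
  rw [rename_monomial, X_pow_eq_monomial, monomial_mul, mul_one,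
    show M - (rst μ).degree = μ (Fin.last n) by have := rst_degree μ; omega, rst_recon]

lemma isHomogeneous_degree_eq {P : MvPolynomial (Fin (n+1)) K} {M : ℕ}
    (hP : P.IsHomogeneous M) {μ : Fin (n+1) →₀ ℕ} (hμ : μ ∈ P.support) : μ.degree = M := by
  rw [Finsupp.degree_eq_weight_one]
  exact hP (mem_support_iff.mp hμ)

theorem homL_dh {P : MvPolynomial (Fin (n+1)) K} {M : ℕ} (hP : P.IsHomogeneous M) :
    homL M (dh P) = P := by
  have h1 : ∀ μ ∈ P.support, homL M (dh (monomial μ (coeff μ P))) = monomial μ (coeff μ P) :=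
    fun μ hμ => homL_dh_monomial (isHomogeneous_degree_eq hP hμ)
  calc homL M (dh P) = ∑ μ ∈ P.support, homL M (dh (monomial μ (coeff μ P))) := by
        conv_lhs => rw [as_sum P]
        rw [map_sum dh, map_sum]
      _ = ∑ μ ∈ P.support, monomial μ (coeff μ P) := Finset.sum_congr rfl h1
      _ = P := (as_sum P).symm

theorem dh_inj {P Q : MvPolynomial (Fin (n+1)) K} {M : ℕ} (hP : P.IsHomogeneous M)
    (hQ : Q.IsHomogeneous M) (h : dh P = dh Q) : P = Q := by
  rw [← homL_dh hP, ← homL_dh hQ, h]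

theorem dh_totalDegree_le {P : MvPolynomial (Fin (n+1)) K} {M : ℕ} (hP : P.IsHomogeneous M) :
    (dh P).totalDegree ≤ M := by
  have : dh P = ∑ μ ∈ P.support, monomial (rst μ) (coeff μ P) := by
    conv_lhs => rw [as_sum P]
    rw [map_sum dh]
    exact Finset.sum_congr rfl fun μ _ => dh_monomial μ _
  rw [this]
  refine le_trans (totalDegree_finset_sum _ _) (Finset.sup_le fun μ hμ => ?_)
  by_cases hc : coeff μ P = 0
  · simp [hc]
  · rw [totalDegree_monomial _ hc]
    have h1 : (rst μ).sum (fun _ e => e) = (rst μ).degree := rfl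
    have := rst_degree μ
    have := isHomogeneous_degree_eq hP hμ
    omega


section General
variable {σ : Type*}

lemma hc_mul_homog {w : MvPolynomial σ K} {c : ℕ} (hw : w.IsHomogeneous c)
    (p : MvPolynomial σ K) (M : ℕ) :
    homogeneousComponent M (p * w)
      = if c ≤ M then homogeneousComponent (M - c) p * w else 0 := by
  have hdecomp : p * w = ∑ k ∈ Finset.range (p.totalDegree + 1), homogeneousComponent k p * w := by
    rw [← Finset.sum_mul, sum_homogeneousComponent]
  have hmem : ∀ k, homogeneousComponent k p * w ∈ homogeneousSubmodule σ K (k + c) :=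
    fun k => (mem_homogeneousSubmodule _ _).2 ((homogeneousComponent_isHomogeneous k p).mul hw)
  by_cases hcM : c ≤ M
  · have h1 : ∀ k ∈ Finset.range (p.totalDegree+1),
        homogeneousComponent M (homogeneousComponent k p * w)
          = if k = M - c then homogeneousComponent k p * w else 0 := by
      intro k _
      rw [homogeneousComponent_of_mem (hmem k)]
      exact if_congr (by omega) rfl rfl
    rw [hdecomp, map_sum, Finset.sum_congr rfl h1, Finset.sum_ite_eq', if_pos hcM]
    split_ifs with h
    · rfl
    · rw [homogeneousComponent_eq_zero _ p (by simp only [Finset.mem_range, not_lt] at h; omega),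
        zero_mul]
  · have h1 : ∀ k ∈ Finset.range (p.totalDegree+1),
        homogeneousComponent M (homogeneousComponent k p * w) = 0 := by
      intro k _
      rw [homogeneousComponent_of_mem (hmem k), if_neg (by omega)]
    rw [hdecomp, map_sum, Finset.sum_congr rfl h1, Finset.sum_const_zero, if_neg hcM]

lemma hc_top_ne_zero {p : MvPolynomial σ K} (hp : p ≠ 0) :
    homogeneousComponent p.totalDegree p ≠ 0 := by
  obtain ⟨μ, hμ, hdeg⟩ := Finset.exists_mem_eq_sup p.support
    (support_nonempty.mpr hp) (fun s => s.sum fun _ e => e)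
  intro h0
  have hcc := coeff_homogeneousComponent p.totalDegree p μ
  rw [h0, coeff_zero] at hcc
  rw [if_pos (by rw [show μ.degree = μ.sum fun _ e => e from rfl]; exact hdeg.symm)] at hcc
  exact mem_support_iff.mp hμ hcc.symm

lemma totalDegree_mul_eq {p q : MvPolynomial σ K} (hp : p ≠ 0) (hq : q ≠ 0) :
    (p * q).totalDegree = p.totalDegree + q.totalDegree := by
  refine le_antisymm (totalDegree_mul p q) ?_
  set a := p.totalDegree
  set b := q.totalDegree
  have key : homogeneousComponent (a + b) (p * q)
      = homogeneousComponent a p * homogeneousComponent b q := by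
    have hq2 : p * q = ∑ k ∈ Finset.range (b + 1), p * homogeneousComponent k q := by
      rw [← Finset.mul_sum, sum_homogeneousComponent]
    rw [hq2, map_sum]
    rw [Finset.sum_eq_single_of_mem b (Finset.mem_range.2 (by omega))]
    · rw [hc_mul_homog (homogeneousComponent_isHomogeneous b q), if_pos (by omega),
        Nat.add_sub_cancel]
    · intro k hk hkb
      rw [hc_mul_homog (homogeneousComponent_isHomogeneous k q)]
      simp only [Finset.mem_range] at hk
      split_ifs with h
      · rw [homogeneousComponent_eq_zero _ p (by omega), zero_mul]
      · rfl
  by_contra hlt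
  push_neg at hlt
  have h0 := homogeneousComponent_eq_zero (a + b) (p * q) hlt
  rw [key] at h0
  exact mul_ne_zero (hc_top_ne_zero hp) (hc_top_ne_zero hq) h0

lemma totalDegree_pow_eq {p : MvPolynomial σ K} (hp : p ≠ 0) (e : ℕ) :
    (p ^ e).totalDegree = e * p.totalDegree := by
  induction e with
  | zero => simp
  | succ e ih =>
      rw [pow_succ, totalDegree_mul_eq (pow_ne_zero e hp) hp, ih]
      ring

lemma weight_one_single {τ : Type*} (i : τ) :
    (Finsupp.weight (1 : τ → ℕ)) (Finsupp.single i 1) = 1 := by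
  simp [Finsupp.weight, Finsupp.linearCombination, Finsupp.sum_single_index]

lemma pderiv_isHomogeneous {P : MvPolynomial σ K} {M : ℕ} (hP : P.IsHomogeneous M)
    (i : σ) : (pderiv i P).IsHomogeneous (M - 1) := by
  have key : ∀ μ ∈ P.support, (pderiv i (monomial μ (coeff μ P))).IsHomogeneous (M - 1) := by
    intro μ hμ
    rw [pderiv_monomial]
    by_cases h : μ i = 0
    · rw [h]
      simp only [Nat.cast_zero, mul_zero, map_zero]
      exact (mem_homogeneousSubmodule _ _).mp ((homogeneousSubmodule σ K (M-1)).zero_mem)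
    · apply isHomogeneous_monomial
      have hrec : (μ - Finsupp.single i 1) + Finsupp.single i 1 = μ := by
        ext j
        simp only [Finsupp.add_apply, Finsupp.tsub_apply]
        by_cases hj : j = i
        · subst hj; simp only [Finsupp.single_eq_same]; omega
        · simp only [Finsupp.single_eq_of_ne' (Ne.symm hj)]; omega
      have hM : (Finsupp.weight (1 : σ → ℕ)) μ = M := hP (mem_support_iff.mp hμ)
      have hsum := congrArg (Finsupp.weight (1 : σ → ℕ)) hrec
      rw [map_add, weight_one_single, hM] at hsum
      rw [Finsupp.degree_eq_weight_one]
      change (Finsupp.weight (1 : σ → ℕ)) _ = M - 1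
      omega
  rw [← mem_homogeneousSubmodule]
  have : pderiv i P = ∑ μ ∈ P.support, pderiv i (monomial μ (coeff μ P)) := by
    conv_lhs => rw [as_sum P, map_sum]
  rw [this]
  exact Submodule.sum_mem _ fun μ hμ => (mem_homogeneousSubmodule _ _).mpr (key μ hμ)
end General

variable {K : Type} [Field K] {n : ℕ}

lemma polyHom_eq (f : MvPolynomial (Fin n) K) : polyHom f = homL f.totalDegree f := by
  rw [homL_eq_of_le le_rfl, polyHom]

lemma polyHom_isHomogeneous (f : MvPolynomial (Fin n) K) :
    (polyHom f).IsHomogeneous f.totalDegree := by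
  rw [polyHom_eq]; exact homL_isHomogeneous _ _

lemma dh_polyHom (f : MvPolynomial (Fin n) K) : dh (polyHom f) = f := by
  rw [polyHom_eq]; exact dh_homL le_rfl

lemma vdeg_le (a : Fin n → MvPolynomial (Fin n) K) (j : Fin n) :
    (a j).totalDegree ≤ vdegD a := by
  exact Finset.le_sup (f := fun i => (a i).totalDegree) (Finset.mem_univ j)

lemma derHom_castSucc (a : Fin n → MvPolynomial (Fin n) K) (j : Fin n) :
    derHom a (Fin.castSucc j) = homL (vdegD a) (a j) := by
  have hj : ((Fin.castSucc j : Fin (n+1)) : ℕ) < n := by simp only [Fin.coe_castSucc]; exact j.isLt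
  rw [derHom, dif_pos hj, Fin.castLT_castSucc, homL_eq_of_le (vdeg_le a j)]

lemma derHom_last (a : Fin n → MvPolynomial (Fin n) K) : derHom a (Fin.last n) = 0 := by
  rw [derHom, dif_neg]
  simp

lemma pderiv_X_last_pow (j : Fin n) (k : ℕ) :
    pderiv (Fin.castSucc j) ((X (Fin.last n) : MvPolynomial (Fin (n+1)) K) ^ k) = 0 := by
  rw [pderiv_pow, pderiv_X_of_ne (Fin.ne_of_lt (Fin.castSucc_lt_last j)).symm]
  simp

lemma dh_pderiv_homL {g : MvPolynomial (Fin n) K} {M : ℕ} (h : g.totalDegree ≤ M) (j : Fin n) :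
    dh (pderiv (Fin.castSucc j) (homL M g)) = pderiv j g := by
  rw [homL_apply, map_sum, map_sum]
  have h1 : ∀ t ∈ Finset.range (M+1),
      dh (pderiv (Fin.castSucc j)
        (rename Fin.castSucc (homogeneousComponent t g) * X (Fin.last n) ^ (M - t)))
      = pderiv j (homogeneousComponent t g) := by
    intro t _
    rw [pderiv_mul, pderiv_X_last_pow, mul_zero, add_zero,
      pderiv_rename (Fin.castSucc_injective n), map_mul, map_pow, dh_X_last, one_pow, mul_one,
      dh_rename]
  rw [Finset.sum_congr rfl h1, ← map_sum]
  congr 1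
  have key : ∑ t ∈ Finset.range (g.totalDegree + 1), homogeneousComponent t g
      = ∑ t ∈ Finset.range (M+1), homogeneousComponent t g := by
    apply Finset.sum_subset
    · intro t ht; simp only [Finset.mem_range] at *; omega
    · intro t _ ht
      simp only [Finset.mem_range, not_lt] at ht
      exact homogeneousComponent_eq_zero _ _ (by omega)
  rw [← key, sum_homogeneousComponent]

lemma dh_pderiv_polyHom (g : MvPolynomial (Fin n) K) (j : Fin n) :
    dh (pderiv (Fin.castSucc j) (polyHom g)) = pderiv j g := by
  rw [polyHom_eq]; exact dh_pderiv_homL le_rfl j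

lemma derMap_apply {m : ℕ} (g : MvPolynomial (Fin m) K) (a : Fin m → MvPolynomial (Fin m) K) :
    derMap g a = ∑ i, a i * pderiv i g := rfl

lemma mem_DQ_iff {m r : ℕ} (fi : Fin r → MvPolynomial (Fin m) K) (e : Fin r → ℕ)
    (a : Fin m → MvPolynomial (Fin m) K) :
    a ∈ DQ fi e ↔ ∀ i, fi i ^ e i ∣ ∑ j, a j * pderiv j (fi i) := by
  rw [DQ, Submodule.mem_iInf]
  exact forall_congr' fun i => by
    rw [Dgk, Submodule.mem_comap, Ideal.mem_span_singleton, derMap_apply]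

lemma mem_LHS_iff {r : ℕ} (fi : Fin r → MvPolynomial (Fin n) K) (e : Fin r → ℕ)
    (ξ : Fin (n+1) → MvPolynomial (Fin (n+1)) K) :
    ξ ∈ DQ (fun i => polyHom (fi i)) e ⊓ noLast n ↔
      (∀ i, polyHom (fi i) ^ e i ∣ ∑ j, ξ j * pderiv j (polyHom (fi i)))
        ∧ ξ (Fin.last n) = 0 := by
  rw [Submodule.mem_inf, mem_DQ_iff]
  apply and_congr Iff.rfl
  rw [noLast, LinearMap.mem_ker, LinearMap.proj_apply]

end DQHom

/-- `D(f^h) ∩ S^h⟨∂_{x₁},…,∂_{xₙ}⟩ = D(f)^h`, where `f = ∏ fᵢ^{eᵢ}` is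
the irreducible factorization (so `f^h = ∏ (fᵢ^h)^{eᵢ}`), and `D(f)^h` is the
`S^h`-submodule generated by the homogenizations of the elements of `D(f)`. -/
theorem DQ_homogenization {K : Type} [Field K] [CharZero K] {n r : ℕ}
    (f : MvPolynomial (Fin n) K) (fi : Fin r → MvPolynomial (Fin n) K) (e : Fin r → ℕ)
    (hirr : ∀ i, Irreducible (fi i)) (hfac : f = ∏ i, fi i ^ e i) :
    DQ (fun i => polyHom (fi i)) e ⊓ noLast n =
      Submodule.span (MvPolynomial (Fin (n + 1)) K)
        (derHom '' (DQ fi e : Set (Fin n → MvPolynomial (Fin n) K))) := by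
  classical
  open DQHom in
  apply le_antisymm
  · -- LHS ≤ span
    intro ξ hξ
    rw [mem_LHS_iff] at hξ
    obtain ⟨hdvd, hlast⟩ := hξ
    set N := Finset.univ.sup (fun j => (ξ j).totalDegree) with hN
    have hdecomp : ξ = ∑ m ∈ Finset.range (N+1), (fun j => homogeneousComponent m (ξ j)) := by
      funext j
      rw [Finset.sum_apply]
      have hle : (ξ j).totalDegree ≤ N :=
        Finset.le_sup (f := fun j => (ξ j).totalDegree) (Finset.mem_univ j)
      have key : ∑ m ∈ Finset.range ((ξ j).totalDegree + 1), homogeneousComponent m (ξ j)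
          = ∑ m ∈ Finset.range (N+1), homogeneousComponent m (ξ j) := by
        apply Finset.sum_subset
        · intro t ht; simp only [Finset.mem_range] at *; omega
        · intro t _ ht
          simp only [Finset.mem_range, not_lt] at ht
          exact homogeneousComponent_eq_zero _ _ (by omega)
      rw [← key, sum_homogeneousComponent]
    rw [hdecomp]
    apply Submodule.sum_mem
    intro m _
    set ξm : Fin (n+1) → MvPolynomial (Fin (n+1)) K :=
      fun j => homogeneousComponent m (ξ j) with hξm
    show ξm ∈ _
    have hξm_last : ξm (Fin.last n) = 0 := by rw [hξm]; simp only; rw [hlast, map_zero]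
    have hhom : ∀ j, (ξm j).IsHomogeneous m := fun j => homogeneousComponent_isHomogeneous m (ξ j)
    -- divisibility heredity to the component
    have hdvd_m : ∀ i, polyHom (fi i) ^ e i ∣ ∑ j, ξm j * pderiv j (polyHom (fi i)) := by
      intro i
      set gH := polyHom (fi i) with hgH
      set d := (fi i).totalDegree with hd
      have hgHhom : gH.IsHomogeneous d := polyHom_isHomogeneous (fi i)
      obtain ⟨v, hv⟩ := hdvd i
      have key1 : ∑ j, ξm j * pderiv j gH
          = homogeneousComponent (m + (d - 1)) (∑ j, ξ j * pderiv j gH) := by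
        rw [map_sum]
        refine Finset.sum_congr rfl fun j _ => ?_
        rw [hc_mul_homog (pderiv_isHomogeneous hgHhom j), if_pos (by omega), Nat.add_sub_cancel]
      rw [key1, hv, mul_comm (gH ^ e i) v,
        hc_mul_homog (hgHhom.pow (e i)), mul_comm d (e i)]
      split_ifs with h
      · exact dvd_mul_left _ _
      · exact dvd_zero _
    -- dehomogenize
    set a : Fin n → MvPolynomial (Fin n) K := fun j => dh (ξm (Fin.castSucc j)) with ha_def
    set D := vdegD a with hD
    have hdeg_a : ∀ j, (a j).totalDegree ≤ m := fun j => dh_totalDegree_le (hhom _)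
    have hDm : D ≤ m := Finset.sup_le fun j _ => hdeg_a j
    have hdh_sum : ∀ i, dh (∑ j, ξm j * pderiv j (polyHom (fi i)))
        = ∑ j, a j * pderiv j (fi i) := by
      intro i
      rw [map_sum, Fin.sum_univ_castSucc]
      rw [hξm_last, zero_mul, map_zero, add_zero]
      refine Finset.sum_congr rfl fun j _ => ?_
      rw [map_mul, dh_pderiv_polyHom]
    have ha : a ∈ DQ fi e := by
      rw [mem_DQ_iff]
      intro i
      have := _root_.map_dvd (dh (K := K) (n := n)) (hdvd_m i)
      rw [map_pow, dh_polyHom, hdh_sum i] at this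
      exact this
    have hmem : derHom a ∈ Submodule.span (MvPolynomial (Fin (n+1)) K)
        (derHom '' (DQ fi e : Set (Fin n → MvPolynomial (Fin n) K))) :=
      Submodule.subset_span ⟨a, ha, rfl⟩
    have hfin : ξm = (X (Fin.last n) ^ (m - D) : MvPolynomial (Fin (n+1)) K) • derHom a := by
      funext j'
      induction j' using Fin.lastCases with
      | last => rw [Pi.smul_apply, derHom_last, smul_zero, hξm_last]
      | cast j =>
          rw [Pi.smul_apply, derHom_castSucc, smul_eq_mul]
          apply dh_inj (hhom _) (M := m)
          · have h1 : ((X (Fin.last n) : MvPolynomial (Fin (n+1)) K) ^ (m - D)).IsHomogeneous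
                (m - D) := by simpa using (isHomogeneous_X K (Fin.last n)).pow (m - D)
            have h2 := h1.mul (homL_isHomogeneous D (a j))
            rwa [show m - D + D = m by omega] at h2
          · rw [map_mul, map_pow, dh_X_last, one_pow, one_mul, dh_homL (vdeg_le a j)]
    rw [hfin]
    exact Submodule.smul_mem _ _ hmem
  · -- span ≤ LHS
    rw [Submodule.span_le]
    rintro _ ⟨a, ha, rfl⟩
    rw [SetLike.mem_coe, mem_LHS_iff]
    refine ⟨fun i => ?_, derHom_last a⟩
    set g := fi i with hg
    set d := g.totalDegree with hd
    set D := vdegD a with hD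
    have hg0 : g ≠ 0 := (hirr i).ne_zero
    obtain ⟨w, hw⟩ := (mem_DQ_iff fi e a).mp (SetLike.mem_coe.mp ha) i
    set P := ∑ j, derHom a j * pderiv j (polyHom g) with hP
    have hsplit : P = ∑ j : Fin n, homL D (a j) * pderiv (Fin.castSucc j) (polyHom g) := by
      rw [hP, Fin.sum_univ_castSucc, derHom_last, zero_mul, add_zero]
      exact Finset.sum_congr rfl fun j _ => by rw [derHom_castSucc]
    have hPhom : P.IsHomogeneous (D + (d - 1)) := by
      rw [← mem_homogeneousSubmodule, hsplit]
      apply Submodule.sum_mem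
      intro j _
      rw [mem_homogeneousSubmodule]
      exact (homL_isHomogeneous D (a j)).mul (pderiv_isHomogeneous (polyHom_isHomogeneous g) _)
    have hdhP : dh P = g ^ e i * w := by
      rw [hsplit, map_sum, ← hw]
      refine Finset.sum_congr rfl fun j _ => ?_
      rw [map_mul, dh_homL (vdeg_le a j), dh_pderiv_polyHom]
    by_cases hw0 : w = 0
    · have : P = 0 := by
        apply dh_inj hPhom (M := D + (d-1))
        · exact (mem_homogeneousSubmodule _ _).mp
            ((homogeneousSubmodule (Fin (n+1)) K (D + (d-1))).zero_mem)
        · rw [hdhP, hw0, mul_zero, map_zero]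
      rw [this]
      exact dvd_zero _
    · have hle : e i * d + w.totalDegree ≤ D + (d - 1) := by
        have h1 := dh_totalDegree_le hPhom
        rw [hdhP] at h1
        rw [totalDegree_mul_eq (pow_ne_zero _ hg0) hw0, totalDegree_pow_eq hg0, ← hd] at h1
        omega
      set W := homL (D + (d-1) - e i * d) w with hW
      have hGW : ((polyHom g) ^ e i * W).IsHomogeneous (D + (d - 1)) := by
        have := ((polyHom_isHomogeneous g).pow (e i)).mul
          (homL_isHomogeneous (D + (d-1) - e i * d) w)
        rw [mul_comm d (e i)] at this
        rwa [show e i * d + (D + (d-1) - e i * d) = D + (d-1) by omega] at this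
      have hPeq : P = (polyHom g) ^ e i * W := by
        apply dh_inj hPhom hGW
        rw [hdhP, map_mul, map_pow, dh_polyHom, dh_homL (by omega)]
      exact Dvd.intro W hPeq.symm
end
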